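/- Let X be a non-compact Tychonoff space. The following are equivalent: (i) X satisfies S_fin(𝒦_X, 𝒦_X^gp); (ii) One does not have a winning strategy in the game G_fin(𝒦_X, 𝒦_X^gp); (iii) C_k(X) is Reznichenko and has countable fan-tightness; (iv) C_k(X) satisfies S_fin(Ω_{C_k(X),𝟎}, Ω_{C_k(X),𝟎}^gp). -/

import Mathlib

open Set TopologicalSpace

universe u

/-- A non-trivial open cover: a family of nonempty proper open sets covering `X`. -/
def NTOpenCover (X : Type u) [TopologicalSpace X] (𝒰 : Set (Set X)) : Prop :=
  (∀ U ∈ 𝒰, IsOpen U ∧ U.Nonempty ∧ U ≠ Set.univ) ∧ ⋃₀ 𝒰 = Set.univ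

/-- `𝒪_X`, the collection of non-trivial open covers of `X`. -/
def OX (X : Type u) [TopologicalSpace X] : Set (Set (Set X)) := {𝒰 | NTOpenCover X 𝒰}

/-- The Hurewicz property. -/
def HurewiczProp (X : Type u) [TopologicalSpace X] : Prop :=
  ∀ 𝒰 : ℕ → Set (Set X), (∀ n, 𝒰 n ∈ OX X) →
    ∃ ℱ : ℕ → Set (Set X), (∀ n, ℱ n ⊆ 𝒰 n ∧ (ℱ n).Finite) ∧
      ∀ x : X, ∃ m : ℕ, ∀ n ≥ m, x ∈ ⋃₀ ℱ n

/-- The selection principle `S_fin(𝒜, ℬ)`. -/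
def Sfin {α : Type u} (𝒜 ℬ : Set (Set α)) : Prop :=
  ∀ 𝒰 : ℕ → Set α, (∀ n, 𝒰 n ∈ 𝒜) →
    ∃ ℱ : ℕ → Set α, (∀ n, ℱ n ⊆ 𝒰 n ∧ (ℱ n).Finite) ∧ (⋃ n, ℱ n) ∈ ℬ

/-- The selection principle `S_1(𝒜, ℬ)`. -/
def Sone {α : Type u} (𝒜 ℬ : Set (Set α)) : Prop :=
  ∀ 𝒰 : ℕ → Set α, (∀ n, 𝒰 n ∈ 𝒜) →
    ∃ f : ℕ → α, (∀ n, f n ∈ 𝒰 n) ∧ Set.range f ∈ ℬ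

/-- A member `C` of a collection `ℭ` is groupable if there is a finite-to-one map
`φ : C → ℕ` such that for every infinite `J ⊆ ℕ`, `⋃ {φ⁻¹(n) : n ∈ J} ∈ ℭ`. -/
def Groupable {α : Type u} (ℭ : Set (Set α)) (C : Set α) : Prop :=
  ∃ φ : α → ℕ, (∀ n : ℕ, {x ∈ C | φ x = n}.Finite) ∧
    ∀ J : Set ℕ, J.Infinite → {x ∈ C | φ x ∈ J} ∈ ℭ

/-- `ℭ^gp`, the collection of groupable members of `ℭ`. -/
def groupables {α : Type u} (ℭ : Set (Set α)) : Set (Set α) :=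
  {C | C ∈ ℭ ∧ Groupable ℭ C}

/-- The Menger property. -/
def MengerProp (X : Type u) [TopologicalSpace X] : Prop := Sfin (OX X) (OX X)

/-- The Rothberger property. -/
def RothbergerProp (X : Type u) [TopologicalSpace X] : Prop := Sone (OX X) (OX X)

/-- The Gerlits-Nagy property: Hurewicz and Rothberger. -/
def GerlitsNagyProp (X : Type u) [TopologicalSpace X] : Prop :=
  HurewiczProp X ∧ RothbergerProp X

/-- `𝒪_X(𝒜)`, the collection of `𝒜`-covers of `X`. -/
def ACovers (X : Type u) [TopologicalSpace X] (𝒜 : Set (Set X)) : Set (Set (Set X)) :=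
  {𝒰 | 𝒰 ∈ OX X ∧ ∀ A ∈ 𝒜, ∃ U ∈ 𝒰, A ⊆ U}

/-- `𝒦_X`, the collection of `k`-covers of `X`. -/
def KCovers (X : Type u) [TopologicalSpace X] : Set (Set (Set X)) :=
  {𝒰 | 𝒰 ∈ OX X ∧ ∀ K : Set X, IsCompact K → K.Nonempty → ∃ U ∈ 𝒰, K ⊆ U}

/-- `Ω_X`, the collection of `ω`-covers of `X`. -/
def OmegaCovers (X : Type u) [TopologicalSpace X] : Set (Set (Set X)) :=
  {𝒰 | 𝒰 ∈ OX X ∧ ∀ F : Set X, F.Finite → F.Nonempty → ∃ U ∈ 𝒰, F ⊆ U}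

/-- An ideal of closed sets of `X`. -/
def IdealOfClosedSets (X : Type u) [TopologicalSpace X] (𝒜 : Set (Set X)) : Prop :=
  (∀ A ∈ 𝒜, IsClosed A ∧ A.Nonempty ∧ A ≠ Set.univ) ∧
  (∀ F : Set X, F.Finite → F.Nonempty → F ∈ 𝒜) ∧
  (∀ A B : Set X, A ∈ 𝒜 → B ∈ 𝒜 → A ∪ B ≠ Set.univ → A ∪ B ∈ 𝒜) ∧
  (∀ A ∈ 𝒜, ∀ B : Set X, B ⊆ A → IsClosed B → B.Nonempty → B ∈ 𝒜)

/-- One has a winning strategy in the Hurewicz game on `X`. -/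
def OneWinsHurewicz (X : Type u) [TopologicalSpace X] : Prop :=
  ∃ σ : List (Set (Set X)) → Set (Set X), (∀ s, σ s ∈ OX X) ∧
    ∀ F : ℕ → Set (Set X),
      (∀ n, (F n).Finite ∧ F n ⊆ σ (List.ofFn fun i : Fin n => F i)) →
        ∃ x : X, ∀ m : ℕ, ∃ n ≥ m, x ∉ ⋃₀ F n

/-- One has a winning strategy in `G_fin(𝒜, ℬ)`. -/
def OneWinsGfin {α : Type u} (𝒜 ℬ : Set (Set α)) : Prop :=
  ∃ σ : List (Set α) → Set α, (∀ s, σ s ∈ 𝒜) ∧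
    ∀ F : ℕ → Set α,
      (∀ n, (F n).Finite ∧ F n ⊆ σ (List.ofFn fun i : Fin n => F i)) →
        (⋃ n, F n) ∉ ℬ

/-- One has a winning predetermined strategy in `G_fin(𝒜, ℬ)`. -/
def OneWinsPreGfin {α : Type u} (𝒜 ℬ : Set (Set α)) : Prop :=
  ∃ σ : ℕ → Set α, (∀ n, σ n ∈ 𝒜) ∧
    ∀ F : ℕ → Set α, (∀ n, (F n).Finite ∧ F n ⊆ σ n) → (⋃ n, F n) ∉ ℬ

/-- One has a winning strategy in `G_1(𝒜, ℬ)`. -/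
def OneWinsGone {α : Type u} (𝒜 ℬ : Set (Set α)) : Prop :=
  ∃ σ : List α → Set α, (∀ s, σ s ∈ 𝒜) ∧
    ∀ f : ℕ → α, (∀ n, f n ∈ σ (List.ofFn fun i : Fin n => f i)) → Set.range f ∉ ℬ

/-- One has a winning predetermined strategy in `G_1(𝒜, ℬ)`. -/
def OneWinsPreGone {α : Type u} (𝒜 ℬ : Set (Set α)) : Prop :=
  ∃ σ : ℕ → Set α, (∀ n, σ n ∈ 𝒜) ∧
    ∀ f : ℕ → α, (∀ n, f n ∈ σ n) → Set.range f ∉ ℬ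

/-- The collection `𝒜` of subsets of `X`, viewed as a hyperspace with the Vietoris topology. -/
def Hyper (X : Type u) (𝒜 : Set (Set X)) : Type u := {K : Set X // K ∈ 𝒜}

/-- The Vietoris topology on `Hyper X 𝒜`. -/
instance Hyper.topologicalSpace (X : Type u) [TopologicalSpace X] (𝒜 : Set (Set X)) :
    TopologicalSpace (Hyper X 𝒜) :=
  TopologicalSpace.generateFrom
    {S | ∃ U : Set X, IsOpen U ∧
      (S = {K : Hyper X 𝒜 | K.1 ⊆ U} ∨ S = {K : Hyper X 𝒜 | (K.1 ∩ U).Nonempty})}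

/-- `𝕂(X)`: the nonempty compact subsets of `X` with the Vietoris topology. -/
abbrev HyperK (X : Type u) [TopologicalSpace X] : Type u :=
  Hyper X {K : Set X | IsCompact K ∧ K.Nonempty}

/-- `𝒫_fin(X)`: the nonempty finite subsets of `X` with the Vietoris topology. -/
abbrev PFin (X : Type u) : Type u :=
  Hyper X {F : Set X | F.Finite ∧ F.Nonempty}

/-- `C_p(X)`: continuous real-valued functions with the topology of pointwise convergence
(the subspace topology from the product topology on `X → ℝ`). -/
abbrev Cp (X : Type u) [TopologicalSpace X] : Type u := {f : X → ℝ // Continuous f}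

/-- `C_k(X)`: continuous real-valued functions with the compact-open topology. -/
def Ck (X : Type u) [TopologicalSpace X] : Type u := {f : X → ℝ // Continuous f}

instance Ck.topologicalSpace (X : Type u) [TopologicalSpace X] : TopologicalSpace (Ck X) :=
  TopologicalSpace.generateFrom
    {S | ∃ (K : Set X) (U : Set ℝ), IsCompact K ∧ IsOpen U ∧
      S = {f : Ck X | ∀ x ∈ K, f.1 x ∈ U}}

/-- The constantly zero function in `C_p(X)`. -/
def zeroCp (X : Type u) [TopologicalSpace X] : Cp X := ⟨fun _ => (0 : ℝ), continuous_const⟩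

/-- The constantly zero function in `C_k(X)`. -/
def zeroCk (X : Type u) [TopologicalSpace X] : Ck X := ⟨fun _ => (0 : ℝ), continuous_const⟩

/-- `Ω_{Y,y}`: the sets having `y` in their closure but not containing `y`. -/
def OmegaPt (Y : Type u) [TopologicalSpace Y] (y : Y) : Set (Set Y) :=
  {A | y ∈ closure A ∧ y ∉ A}

/-- Countable fan-tightness. -/
def CountableFanTightness (Y : Type u) [TopologicalSpace Y] : Prop :=
  ∀ y : Y, Sfin (OmegaPt Y y) (OmegaPt Y y)

/-- Countable strong fan-tightness. -/
def CountableStrongFanTightness (Y : Type u) [TopologicalSpace Y] : Prop :=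
  ∀ y : Y, Sone (OmegaPt Y y) (OmegaPt Y y)

/-- The Reznichenko property: every countable member of `Ω_{Y,y}` is groupable. -/
def Reznichenko (Y : Type u) [TopologicalSpace Y] : Prop :=
  ∀ y : Y, ∀ A ∈ OmegaPt Y y, A.Countable → Groupable (OmegaPt Y y) A


/-!
Everything goes through the Hurewicz property for `k`-covers (`KHurewicz`): from any sequence of
`k`-covers one can pick finite sets so that each nonempty compact set lies in a picked member at
all but finitely many stages.

(i) gives `KHurewicz` when applied to the covers by open sets refining each of the first `n`
covers: the groups eventually contain a superset of any compact set, and as only finitely many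
members come from the first `m` refinements, a bounded number of groups already provides a member
refining the `m`-th cover. Conversely, `KHurewicz` applied to intersections of `n + 1` members of
the `n`-th cover, along a sparse subsequence of stages, lets one keep from each selected
intersection a member not used before; the stages then form disjoint finite groups, giving (i).
For (ii), One's covers may be shrunk to countable `k`-subcovers, so he reaches only countably many
positions; Two answers with `KHurewicz` applied to refinements along an enumeration of them, and
the countable `k`-cover so produced is groupable by (i).

In `C_k(X)` a function `f` near `0` stands for the open set `{x | |f x| < ε}`, which turns
sequences in `Ω_{C_k(X),0}` into sequences of `k`-covers, and complete regularity turns `k`-covers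
back into such sequences; (iii) and (iv) agree because `C_k(X)` is homogeneous.
-/

open Filter Topology Function

section Groupability

variable {α : Type u}

theorem Sfin.exists_countable_subset {𝒜 ℬ : Set (Set α)} (hs : Sfin 𝒜 ℬ) {A : Set α}
    (hA : A ∈ 𝒜) : ∃ C ⊆ A, C.Countable ∧ C ∈ ℬ := by
  obtain ⟨F, hF, hC⟩ := hs (fun _ => A) fun _ => hA
  exact ⟨⋃ n, F n, iUnion_subset fun n => (hF n).1,
    countable_iUnion fun n => (hF n).2.countable, hC⟩

theorem Groupable.of_subset {ℭ : Set (Set α)} {A B : Set α} (hB : Groupable ℭ B) (hBA : B ⊆ A)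
    (hA : A.Countable) (hmono : ∀ C ∈ ℭ, ∀ D, C ⊆ D → D ⊆ A → D ∈ ℭ) : Groupable ℭ A := by
  classical
  obtain ⟨φ, hfin, hJ⟩ := hB
  obtain ⟨e, he⟩ := countable_iff_exists_injOn.mp hA
  refine ⟨fun x => if x ∈ B then φ x else e x, fun n => ?_, fun J hJinf => ?_⟩
  · have hrest : {x ∈ A | e x = n}.Finite :=
      ((finite_singleton n).subset (image_subset_iff.2 fun x hx => hx.2)).of_finite_image
        (he.mono fun x hx => hx.1)
    refine ((hfin n).union hrest).subset fun x ⟨hxA, hx⟩ => ?_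
    by_cases hxB : x ∈ B
    · exact Or.inl ⟨hxB, by simpa [hxB] using hx⟩
    · exact Or.inr ⟨hxA, by simpa [hxB] using hx⟩
  · refine hmono _ (hJ J hJinf) _ (fun x ⟨hxB, hx⟩ => ⟨hBA hxB, by simpa [hxB] using hx⟩)
      fun x hx => hx.1

theorem mem_groupables_of_subset {ℭ : Set (Set α)} {A B : Set α} (hB : B ∈ groupables ℭ)
    (hBA : B ⊆ A) (hA : A.Countable) (hmono : ∀ C ∈ ℭ, ∀ D, C ⊆ D → D ⊆ A → D ∈ ℭ) :
    A ∈ groupables ℭ :=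
  ⟨hmono B hB.1 A hBA subset_rfl, hB.2.of_subset hBA hA hmono⟩

theorem Sfin.mem_groupables_of_countable {ℭ : Set (Set α)} (hs : Sfin ℭ (groupables ℭ))
    {A : Set α} (hA : A ∈ ℭ) (hAc : A.Countable)
    (hmono : ∀ C ∈ ℭ, ∀ D, C ⊆ D → D ⊆ A → D ∈ ℭ) : A ∈ groupables ℭ := by
  obtain ⟨C, hCA, -, hC⟩ := hs.exists_countable_subset hA
  exact mem_groupables_of_subset hC hCA hAc hmono

theorem eventually_exists_of_groupable {ℭ : Set (Set α)} {C : Set α} {φ : α → ℕ}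
    (hφ : ∀ J : Set ℕ, J.Infinite → {x ∈ C | φ x ∈ J} ∈ ℭ) {P : α → Prop}
    (hP : ∀ D ∈ ℭ, ∃ x ∈ D, P x) : ∀ᶠ j in atTop, ∃ x ∈ C, φ x = j ∧ P x := by
  rw [← Nat.cofinite_eq_atTop, eventually_cofinite]
  by_contra h
  obtain ⟨x, ⟨hxC, hxJ⟩, hPx⟩ := hP _ (hφ _ h)
  exact hxJ ⟨x, hxC, rfl, hPx⟩

theorem Set.Infinite.exists_mem_of_eventually {J : Set ℕ} (hJ : J.Infinite) {P : ℕ → Prop}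
    (hP : ∀ᶠ k in atTop, P k) : ∃ k ∈ J, P k :=
  ((Nat.frequently_atTop_iff_infinite.2 hJ).and_eventually hP).exists

theorem groupable_iUnion_of_pairwise_disjoint {ℭ : Set (Set α)} {B : ℕ → Set α}
    (hfin : ∀ k, (B k).Finite) (hdisj : Pairwise (Disjoint on B))
    (hB : ∀ J : Set ℕ, J.Infinite → ⋃ k ∈ J, B k ∈ ℭ) : Groupable ℭ (⋃ k, B k) := by
  classical
  let φ : α → ℕ := fun x => if h : ∃ k, x ∈ B k then h.choose else 0
  have hφ : ∀ k, ∀ x ∈ B k, φ x = k := fun k x hx => by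
    have h : ∃ k, x ∈ B k := ⟨k, hx⟩
    simp only [φ, dif_pos h]
    by_contra hne
    exact disjoint_left.mp (hdisj hne) h.choose_spec hx
  have hsep : ∀ J : Set ℕ, {x ∈ ⋃ k, B k | φ x ∈ J} = ⋃ k ∈ J, B k := fun J => by
    ext x
    simp only [mem_iUnion, exists_prop]
    constructor
    · rintro ⟨⟨k, hk⟩, hJ⟩
      exact ⟨k, hφ k x hk ▸ hJ, hk⟩
    · rintro ⟨k, hkJ, hk⟩
      exact ⟨⟨k, hk⟩, (hφ k x hk).symm ▸ hkJ⟩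
  refine ⟨φ, fun n => ?_, fun J hJ => hsep J ▸ hB J hJ⟩
  have h := hsep {n}
  rw [biUnion_singleton] at h
  exact (show {x ∈ ⋃ k, B k | φ x = n} = B n from h) ▸ hfin n

theorem exists_groupable_selection_of_blocks {ℭ : Set (Set α)} {𝒜 : ℕ → Set α} {sq : ℕ → ℕ}
    (hsq : Injective sq) {B : ℕ → Set α} (hB : ∀ k, B k ⊆ 𝒜 (sq k) ∧ (B k).Finite)
    (hdisj : Pairwise (Disjoint on B)) (hcov : ∀ J : Set ℕ, J.Infinite → ⋃ k ∈ J, B k ∈ ℭ) :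
    ∃ ℱ : ℕ → Set α, (∀ n, ℱ n ⊆ 𝒜 n ∧ (ℱ n).Finite) ∧ ⋃ n, ℱ n ∈ groupables ℭ := by
  refine ⟨fun n => ⋃ k ∈ sq ⁻¹' {n}, B k, fun n => ⟨iUnion₂_subset fun k hk => hk ▸ (hB k).1,
    ((subsingleton_singleton.preimage hsq).finite).biUnion fun k _ => (hB k).2⟩, ?_⟩
  have hunion : ⋃ n, ⋃ k ∈ sq ⁻¹' {n}, B k = ⋃ k, B k := by
    ext x
    simp
  rw [hunion]
  exact ⟨by simpa using hcov univ infinite_univ,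
    groupable_iUnion_of_pairwise_disjoint (fun k => (hB k).2) hdisj hcov⟩

theorem exists_finite_late_witnesses {G : ℕ → Set α} (hG : ∀ n, (G n).Finite) {φ : α → ℕ}
    (hφ : ∀ j, {x ∈ ⋃ n, G n | φ x = j}.Finite) :
    ∃ S : ℕ → Set α, (∀ m, (S m).Finite ∧ S m ⊆ {x | ∃ n ≥ m, x ∈ G n}) ∧
      ∀ P : α → Prop, (∀ᶠ j in atTop, ∃ x ∈ ⋃ n, G n, φ x = j ∧ P x) →
        ∀ᶠ m in atTop, ∃ x ∈ S m, P x := by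
  let early : ℕ → Set α := fun m => ⋃ n ∈ Iio m, G n
  have hearly : ∀ m, (early m).Finite := fun m => (finite_Iio m).biUnion fun n _ => hG n
  -- the groups `j ≤ bound m` cannot all be served by the finitely many members of `early m`
  let bound : ℕ → ℕ := fun m => (early m).ncard + m
  refine ⟨fun m => {x | (∃ n ≥ m, x ∈ G n) ∧ φ x ≤ bound m}, fun m => ⟨?_, fun x hx => hx.1⟩,
    fun P hP => ?_⟩
  · refine ((finite_Iic (bound m)).biUnion fun j _ => hφ j).subset ?_
    rintro x ⟨⟨n, -, hx⟩, hφx⟩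
    exact mem_biUnion (mem_Iic.2 hφx) ⟨mem_iUnion.2 ⟨n, hx⟩, rfl⟩
  obtain ⟨j₀, hj₀⟩ := eventually_atTop.1 hP
  refine eventually_atTop.2 ⟨j₀, fun m hm => ?_⟩
  by_contra hno
  have hIcc : Icc j₀ (bound m) ⊆ φ '' early m := by
    rintro j ⟨hj, hjb⟩
    obtain ⟨x, hxG, rfl, hPx⟩ := hj₀ j hj
    obtain ⟨n, hn⟩ := mem_iUnion.1 hxG
    refine ⟨x, mem_biUnion (mem_Iio.2 (lt_of_not_ge fun hmn => hno ?_)) hn, rfl⟩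
    exact ⟨x, ⟨⟨n, hmn, hn⟩, hjb⟩, hPx⟩
  have hcard := (ncard_le_ncard hIcc ((hearly m).image φ)).trans (ncard_image_le (hearly m))
  rw [ncard_Icc_nat, show bound m = (early m).ncard + m from rfl] at hcard
  omega

theorem exists_strictMono_fresh_blocks {β γ : Type*} {I : ℕ → Set β} (hI : ∀ n, (I n).Finite)
    (c : ℕ → β → Finset γ) (hc : ∀ n, ∀ i ∈ I n, (c n i).card = n + 1) :
    ∃ sq : ℕ → ℕ, StrictMono sq ∧ ∃ B : ℕ → Set γ,
      (∀ k, (B k).Finite ∧ B k ⊆ ⋃ i ∈ I (sq k), (c (sq k) i : Set γ)) ∧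
      (∀ k, ∀ i ∈ I (sq k), ∃ a ∈ c (sq k) i, a ∈ B k) ∧ Pairwise (Disjoint on B) := by
  classical
  let cand : ℕ → Finset γ := fun n => (hI n).toFinset.biUnion (c n)
  -- the state after `k` steps is the `k`-th index together with all candidates used so far
  let step : ℕ × Finset γ → ℕ × Finset γ :=
    fun p => (max (p.1 + 1) (p.2 ∪ cand p.1).card, p.2 ∪ cand p.1)
  let st : ℕ → ℕ × Finset γ := fun k => step^[k] (0, ∅)
  have hst : ∀ k, st (k + 1) = step (st k) := fun k => iterate_succ_apply' step k _
  have hsq : StrictMono fun k => (st k).1 :=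
    strictMono_nat_of_lt_succ fun k => by rw [hst]; exact Nat.lt_of_succ_le (le_max_left _ _)
  have hcard : ∀ k, (st k).2.card ≤ (st k).1 := by
    intro k
    induction k with
    | zero => simp [st]
    | succ k _ => rw [hst]; exact le_max_right _ _
  have hmono : Monotone fun k => (st k).2 :=
    monotone_nat_of_le_succ fun k => by rw [hst]; exact Finset.subset_union_left
  have hused : ∀ j k, j < k → cand (st j).1 ⊆ (st k).2 := fun j k hjk =>
    (show cand (st j).1 ⊆ (st (j + 1)).2 by rw [hst]; exact Finset.subset_union_right).trans
      (hmono hjk)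
  refine ⟨fun k => (st k).1, hsq, fun k => ↑(cand (st k).1 \ (st k).2),
    fun k => ⟨Finset.finite_toSet _, fun a ha => ?_⟩, fun k i hi => ?_,
    (pairwise_disjoint_on _).2 fun j k hjk => ?_⟩
  · obtain ⟨i, hi, ha⟩ := Finset.mem_biUnion.1 (Finset.mem_sdiff.1 ha).1
    exact mem_biUnion ((hI _).mem_toFinset.1 hi) ha
  · obtain ⟨a, ha, hfresh⟩ := Finset.exists_mem_notMem_of_card_lt_card
      (s := (st k).2) (t := c (st k).1 i) (by rw [hc _ i hi]; exact Nat.lt_succ_of_le (hcard k))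
    exact ⟨a, ha, Finset.mem_sdiff.2
      ⟨Finset.mem_biUnion.2 ⟨i, (hI _).mem_toFinset.2 hi, ha⟩, hfresh⟩⟩
  · rw [Finset.disjoint_coe]
    exact Finset.disjoint_of_subset_left (Finset.sdiff_subset.trans (hused j k hjk))
      Finset.sdiff_disjoint.symm

end Groupability

section KCovers

variable {X : Type u} [TopologicalSpace X]

theorem mem_kCovers_of_forall {𝒰 : Set (Set X)}
    (hleg : ∀ U ∈ 𝒰, IsOpen U ∧ U.Nonempty ∧ U ≠ univ)
    (hK : ∀ K, IsCompact K → K.Nonempty → ∃ U ∈ 𝒰, K ⊆ U) : 𝒰 ∈ KCovers X :=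
  ⟨⟨hleg, eq_univ_of_forall fun x =>
    let ⟨_, hU, hxU⟩ := hK {x} isCompact_singleton (singleton_nonempty x)
    mem_sUnion_of_mem (hxU rfl) hU⟩, hK⟩

theorem mem_kCovers_of_subset {A C D : Set (Set X)} (hC : C ∈ KCovers X) (hCD : C ⊆ D)
    (hDA : D ⊆ A) (hA : A ∈ KCovers X) : D ∈ KCovers X :=
  mem_kCovers_of_forall (fun U hU => hA.1.1 U (hDA hU)) fun K hK hne =>
    let ⟨U, hU, hKU⟩ := hC.2 K hK hne
    ⟨U, hCD hU, hKU⟩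

theorem diff_empty_mem_kCovers {𝒲 : Set (Set X)} (ho : ∀ U ∈ 𝒲, IsOpen U)
    (hK : ∀ K, IsCompact K → K.Nonempty → ∃ U ∈ 𝒲, K ⊆ U) (huniv : univ ∉ 𝒲) :
    𝒲 \ {∅} ∈ KCovers X :=
  mem_kCovers_of_forall
    (fun U hU => ⟨ho U hU.1, nonempty_iff_ne_empty.2 hU.2, fun h => huniv (h ▸ hU.1)⟩)
    fun K hK' hne =>
      let ⟨U, hU, hKU⟩ := hK K hK' hne
      ⟨U, ⟨hU, (hne.mono hKU).ne_empty⟩, hKU⟩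

theorem infinite_setOf_subset_of_mem_kCovers {𝒰 : Set (Set X)} (h : 𝒰 ∈ KCovers X) {K : Set X}
    (hK : IsCompact K) (hne : K.Nonempty) : {U ∈ 𝒰 | K ⊆ U}.Infinite := by
  intro hfin
  have hout : ∀ U ∈ {U ∈ 𝒰 | K ⊆ U}, ∃ x, x ∉ U := fun U hU =>
    not_forall.1 fun hall => (h.1.1 U hU.1).2.2 (eq_univ_of_forall hall)
  have : Nonempty X := ⟨hne.some⟩
  choose! p hp using hout
  -- a member containing `K` and all the escape points `p U` would have to escape itself
  obtain ⟨U, hU, hKU⟩ := h.2 (K ∪ p '' {U ∈ 𝒰 | K ⊆ U}) (hK.union (hfin.image p).isCompact)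
    (hne.mono subset_union_left)
  have hUmem : U ∈ {U ∈ 𝒰 | K ⊆ U} := ⟨hU, subset_union_left.trans hKU⟩
  exact hp U hUmem (hKU (Or.inr (mem_image_of_mem p hUmem)))

def kRefinement (𝒰 : ℕ → Set (Set X)) (n : ℕ) : Set (Set X) :=
  {V | IsOpen V ∧ V.Nonempty ∧ ∀ r ≤ n, ∃ U ∈ 𝒰 r, V ⊆ U}

theorem kRefinement_mem_kCovers {𝒰 : ℕ → Set (Set X)} (h𝒰 : ∀ r, 𝒰 r ∈ KCovers X) (n : ℕ) :
    kRefinement 𝒰 n ∈ KCovers X := by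
  refine mem_kCovers_of_forall (fun V ⟨hV, hne, hsub⟩ => ⟨hV, hne, fun hV => ?_⟩)
    fun K hK hne => ?_
  · obtain ⟨U, hU, hVU⟩ := hsub 0 (Nat.zero_le n)
    exact ((h𝒰 0).1.1 U hU).2.2 (univ_subset_iff.1 (hV ▸ hVU))
  · choose U hU hKU using fun r => (h𝒰 r).2 K hK hne
    have hKV : K ⊆ ⋂ r ∈ Iic n, U r := subset_iInter₂ fun r _ => hKU r
    refine ⟨⋂ r ∈ Iic n, U r, ⟨?_, hne.mono hKV, fun r hr => ⟨U r, hU r, biInter_subset_of_mem hr⟩⟩,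
      hKV⟩
    exact (finite_Iic n).isOpen_biInter fun r _ => ((h𝒰 r).1.1 _ (hU r)).1

def HasKSelection (𝒰 : ℕ → Set (Set X)) : Prop :=
  ∃ F : ℕ → Set (Set X), (∀ n, F n ⊆ 𝒰 n ∧ (F n).Finite) ∧
    ∀ K, IsCompact K → K.Nonempty → ∀ᶠ n in atTop, ∃ U ∈ F n, K ⊆ U

def KHurewicz (X : Type u) [TopologicalSpace X] : Prop :=
  ∀ 𝒰 : ℕ → Set (Set X), (∀ n, 𝒰 n ∈ KCovers X) → HasKSelection 𝒰

theorem hasKSelection_of_groupable {α : Type u} {𝒰 : ℕ → Set (Set X)} {G : ℕ → Set α}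
    (hG : ∀ n, (G n).Finite) {O : α → Set X}
    (hO : ∀ n, ∀ a ∈ G n, ∀ r ≤ n, ∃ U ∈ 𝒰 r, O a ⊆ U)
    {ℭ : Set (Set α)} (hgp : Groupable ℭ (⋃ n, G n))
    (hℭ : ∀ K, IsCompact K → K.Nonempty → ∀ D ∈ ℭ, ∃ a ∈ D, K ⊆ O a) : HasKSelection 𝒰 := by
  obtain ⟨φ, hfin, hJ⟩ := hgp
  obtain ⟨S, hS, hSev⟩ := exists_finite_late_witnesses hG hfin
  have hlate : ∀ m, ∀ a ∈ S m, ∃ U ∈ 𝒰 m, O a ⊆ U := fun m a ha =>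
    let ⟨n, hn, haG⟩ := (hS m).2 ha
    hO n a haG m hn
  choose! W hW hOW using hlate
  refine ⟨fun m => W m '' S m, fun m => ⟨image_subset_iff.2 fun a ha => hW m a ha,
    (hS m).1.image _⟩, fun K hK hne => ?_⟩
  filter_upwards [hSev (fun a => K ⊆ O a) (eventually_exists_of_groupable hJ (hℭ K hK hne))]
    with m ⟨a, ha, hKa⟩
  exact ⟨W m a, mem_image_of_mem _ ha, hKa.trans (hOW m a ha)⟩

theorem kHurewicz_of_sfin (hs : Sfin (KCovers X) (groupables (KCovers X))) : KHurewicz X := by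
  intro 𝒰 h𝒰
  obtain ⟨G, hG, hgp⟩ := hs _ (kRefinement_mem_kCovers h𝒰)
  exact hasKSelection_of_groupable (O := id) (fun n => (hG n).2)
    (fun n V hV => ((hG n).1 hV).2.2) hgp.2 fun K hK hne _ hD => hD.2 K hK hne

/-- Non-triviality of the covers can be dropped: a member equal to `X` is selected outright. -/
theorem KHurewicz.hasKSelection (hX : KHurewicz X) {𝒲 : ℕ → Set (Set X)}
    (ho : ∀ n, ∀ U ∈ 𝒲 n, IsOpen U)
    (hK : ∀ n K, IsCompact K → K.Nonempty → ∃ U ∈ 𝒲 n, K ⊆ U) : HasKSelection 𝒲 := by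
  classical
  by_cases hall : ∀ n, univ ∈ 𝒲 n
  · exact ⟨fun _ => {univ}, fun n => ⟨singleton_subset_iff.2 (hall n), finite_singleton _⟩,
      fun K _ _ => Eventually.of_forall fun _ => ⟨univ, rfl, subset_univ K⟩⟩
  obtain ⟨n₀, hn₀⟩ := not_forall.1 hall
  have hk : ∀ n, univ ∉ 𝒲 n → 𝒲 n \ {∅} ∈ KCovers X := fun n h =>
    diff_empty_mem_kCovers (ho n) (hK n) h
  obtain ⟨F, hF, hev⟩ := hX (fun n => if univ ∈ 𝒲 n then 𝒲 n₀ \ {∅} else 𝒲 n \ {∅}) fun n => by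
    split_ifs with h
    exacts [hk n₀ hn₀, hk n h]
  refine ⟨fun n => if univ ∈ 𝒲 n then {univ} else F n, fun n => ?_,
    fun K hK hne => (hev K hK hne).mono fun n hn => ?_⟩
  · dsimp only
    split_ifs with h
    · exact ⟨singleton_subset_iff.2 h, finite_singleton _⟩
    · have hFn := hF n
      simp only [if_neg h] at hFn
      exact ⟨hFn.1.trans sdiff_subset, hFn.2⟩
  · dsimp only
    split_ifs
    exacts [⟨univ, rfl, subset_univ K⟩, hn]

theorem KHurewicz.exists_disjoint_selection (hX : KHurewicz X) {α : Type u} {𝒜 : ℕ → Set α}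
    {O : ℕ → α → Set X} (hO : ∀ n, ∀ a ∈ 𝒜 n, IsOpen (O n a))
    (hinf : ∀ n K, IsCompact K → K.Nonempty → {a ∈ 𝒜 n | K ⊆ O n a}.Infinite) :
    ∃ sq : ℕ → ℕ, StrictMono sq ∧ ∃ B : ℕ → Set α, (∀ k, B k ⊆ 𝒜 (sq k) ∧ (B k).Finite) ∧
      Pairwise (Disjoint on B) ∧
      ∀ K, IsCompact K → K.Nonempty → ∀ᶠ k in atTop, ∃ a ∈ B k, K ⊆ O (sq k) a := by
  classical
  -- intersecting `n + 1` sets at stage `n` leaves room to keep one not used at earlier stages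
  let 𝒲 : ℕ → Set (Set X) :=
    fun n => {V | ∃ s : Finset α, ↑s ⊆ 𝒜 n ∧ s.card = n + 1 ∧ V = ⋂ a ∈ s, O n a}
  obtain ⟨F, hF, hev⟩ := hX.hasKSelection (𝒲 := 𝒲)
    (fun n V ⟨s, hs, _, hV⟩ => hV ▸ isOpen_biInter_finset fun a ha => hO n a (hs ha))
    fun n K hK hne => by
      obtain ⟨s, hs, hcard⟩ := (hinf n K hK hne).exists_subset_card_eq (n + 1)
      exact ⟨_, ⟨s, fun a ha => (hs ha).1, hcard, rfl⟩, subset_iInter₂ fun a ha => (hs ha).2⟩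
  choose! s hs hscard hsV using fun n V (hV : V ∈ F n) => (hF n).1 hV
  obtain ⟨sq, hsq, B, hB, hBmeets, hdisj⟩ :=
    exists_strictMono_fresh_blocks (fun n => (hF n).2) s hscard
  refine ⟨sq, hsq, B, fun k => ⟨fun a ha => ?_, (hB k).1⟩, hdisj, fun K hK hne => ?_⟩
  · obtain ⟨V, hV, haV⟩ := mem_iUnion₂.1 ((hB k).2 ha)
    exact hs _ V hV haV
  · filter_upwards [hsq.tendsto_atTop.eventually (hev K hK hne)] with k ⟨V, hV, hKV⟩
    obtain ⟨a, has, haB⟩ := hBmeets k V hV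
    exact ⟨a, haB, hKV.trans ((hsV _ V hV).symm ▸ biInter_subset_of_mem has)⟩

theorem KHurewicz.sfin_kCovers (hX : KHurewicz X) :
    Sfin (KCovers X) (groupables (KCovers X)) := by
  intro 𝒰 h𝒰
  obtain ⟨sq, hsq, B, hB, hdisj, hev⟩ := hX.exists_disjoint_selection (O := fun _ U => U)
    (fun n U hU => ((h𝒰 n).1.1 U hU).1)
    fun n K hK hne => infinite_setOf_subset_of_mem_kCovers (h𝒰 n) hK hne
  refine exists_groupable_selection_of_blocks hsq.injective hB hdisj fun J hJ =>
    mem_kCovers_of_forall (fun U hU => ?_) fun K hK hne => ?_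
  · obtain ⟨k, -, hk⟩ := mem_iUnion₂.1 hU
    exact (h𝒰 _).1.1 U ((hB k).1 hk)
  · obtain ⟨k, hkJ, U, hU, hKU⟩ := hJ.exists_mem_of_eventually (hev K hK hne)
    exact ⟨U, mem_biUnion hkJ hU, hKU⟩

end KCovers

section Game

variable {α : Type u}

theorem sfin_of_not_oneWinsGfin {𝒜 ℬ : Set (Set α)} (h : ¬ OneWinsGfin 𝒜 ℬ) : Sfin 𝒜 ℬ := by
  intro 𝒰 h𝒰
  by_contra hbad
  exact h ⟨fun s => 𝒰 s.length, fun s => h𝒰 _,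
    fun F hF hmem => hbad ⟨F, fun n => ⟨by simpa using (hF n).2, (hF n).1⟩, hmem⟩⟩

def finPlays (cov : List (Set α) → Set α) : ℕ → Set (List (Set α))
  | 0 => {[]}
  | n + 1 => ⋃ h ∈ finPlays cov n, (fun Q => h ++ [Q]) '' {Q | Q.Finite ∧ Q ⊆ cov h}

theorem countable_finPlays {cov : List (Set α) → Set α} (hcov : ∀ h, (cov h).Countable) :
    ∀ n, (finPlays cov n).Countable
  | 0 => countable_singleton _
  | n + 1 => (countable_finPlays hcov n).biUnion fun h _ =>
      (countable_ofPred_finite_subset (hcov h)).image _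

def playHistory (move : List (Set α) → ℕ → Set α) : ℕ → List (Set α)
  | 0 => []
  | n + 1 => playHistory move n ++ [move (playHistory move n) n]

theorem playHistory_eq_ofFn (move : List (Set α) → ℕ → Set α) (n : ℕ) :
    playHistory move n = List.ofFn fun i : Fin n => move (playHistory move i) i := by
  induction n with
  | zero => rfl
  | succ n ih =>
    rw [List.ofFn_succ', List.concat_eq_append]
    simp only [Fin.val_castSucc, Fin.val_last]
    rw [← ih]
    rfl

theorem playHistory_mem_finPlays {cov : List (Set α) → Set α} {move : List (Set α) → ℕ → Set α}
    (hmove : ∀ n, ∀ h ∈ finPlays cov n, (move h n).Finite ∧ move h n ⊆ cov h) :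
    ∀ n, playHistory move n ∈ finPlays cov n
  | 0 => rfl
  | n + 1 =>
    let hn := playHistory_mem_finPlays hmove n
    mem_biUnion hn ⟨_, hmove n _ hn, rfl⟩

end Game

section KCoverGame

variable {X : Type u} [TopologicalSpace X]

theorem KHurewicz.exists_play_mem_kCovers (hX : KHurewicz X)
    (hcnt : ∀ 𝒰 ∈ KCovers X, ∃ 𝒞 ⊆ 𝒰, 𝒞.Countable ∧ 𝒞 ∈ KCovers X)
    {σ : List (Set (Set X)) → Set (Set X)} (hσ : ∀ s, σ s ∈ KCovers X) :
    ∃ F : ℕ → Set (Set X), (∀ n, (F n).Finite ∧ F n ⊆ σ (List.ofFn fun i : Fin n => F i)) ∧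
      ⋃ n, F n ∈ KCovers X := by
  choose cov hcovσ hcovc hcovK using fun h => hcnt _ (hσ h)
  -- enumerate the countably many positions Two can reach, and refine the covers along it
  obtain ⟨pos, hpos⟩ := (countable_iUnion (countable_finPlays hcovc)).exists_eq_range
    ⟨[], mem_iUnion.2 ⟨0, rfl⟩⟩
  have hpos_inv : ∀ n, ∀ h ∈ finPlays cov n, pos (invFun pos h) = h := fun n h hh =>
    invFun_eq (show h ∈ range pos from hpos ▸ mem_iUnion.2 ⟨n, hh⟩)
  obtain ⟨G, hG, hev⟩ := hX _ (kRefinement_mem_kCovers fun r => hcovK (pos r))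
  choose! w hw hVw using fun m V (hV : V ∈ kRefinement (fun r => cov (pos r)) m) => hV.2.2
  -- a stage `≥ n` makes the play cover every compact set eventually, and a stage `≥` the index
  -- of the position `h` makes the answer refine `cov h`
  let stage : List (Set (Set X)) → ℕ → ℕ := fun h n => max n (invFun pos h)
  let move : List (Set (Set X)) → ℕ → Set (Set X) :=
    fun h n => (fun V => w (stage h n) V (invFun pos h)) '' G (stage h n)
  have hmove : ∀ n, ∀ h ∈ finPlays cov n, (move h n).Finite ∧ move h n ⊆ cov h :=
    fun n h hh => ⟨(hG _).2.image _, by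
      rintro _ ⟨V, hV, rfl⟩
      simpa only [hpos_inv n h hh] using hw _ V ((hG _).1 hV) _ (le_max_right _ _)⟩
  have hplay := playHistory_mem_finPlays hmove
  refine ⟨fun n => move (playHistory move n) n, fun n => ⟨(hmove n _ (hplay n)).1,
    playHistory_eq_ofFn move n ▸ (hmove n _ (hplay n)).2.trans (hcovσ _)⟩,
    mem_kCovers_of_forall (fun U hU => ?_) fun K hK hne => ?_⟩
  · obtain ⟨n, hn⟩ := mem_iUnion.1 hU
    exact (hcovK _).1.1 U ((hmove n _ (hplay n)).2 hn)
  · obtain ⟨M, hM⟩ := eventually_atTop.1 (hev K hK hne)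
    obtain ⟨V, hV, hKV⟩ := hM (stage (playHistory move M) M) (le_max_left _ _)
    exact ⟨_, mem_iUnion.2 ⟨M, mem_image_of_mem _ hV⟩,
      hKV.trans (hVw _ V ((hG _).1 hV) _ (le_max_right _ _))⟩

theorem not_oneWinsGfin_of_sfin (hs : Sfin (KCovers X) (groupables (KCovers X))) :
    ¬ OneWinsGfin (KCovers X) (groupables (KCovers X)) := by
  rintro ⟨σ, hσ, hwin⟩
  obtain ⟨F, hF, hcov⟩ := (kHurewicz_of_sfin hs).exists_play_mem_kCovers (fun 𝒰 h𝒰 =>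
    let ⟨𝒞, h𝒞, hc, hgp⟩ := hs.exists_countable_subset h𝒰
    ⟨𝒞, h𝒞, hc, hgp.1⟩) hσ
  exact hwin F hF (hs.mem_groupables_of_countable hcov
    (countable_iUnion fun n => (hF n).1.countable)
    fun C hC D hCD hDA => mem_kCovers_of_subset hC hCD hDA hcov)

end KCoverGame

section OmegaPt

variable {Y Z : Type u} [TopologicalSpace Y] [TopologicalSpace Z]

theorem Homeomorph.preimage_mem_omegaPt_iff (h : Y ≃ₜ Z) {y : Y} {A : Set Z} :
    h ⁻¹' A ∈ OmegaPt Y y ↔ A ∈ OmegaPt Z (h y) := by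
  simp only [OmegaPt, mem_ofPred_eq, ← h.preimage_closure, mem_preimage]

theorem Groupable.preimage_homeomorph (h : Y ≃ₜ Z) {y : Y} {A : Set Z}
    (hA : Groupable (OmegaPt Z (h y)) A) : Groupable (OmegaPt Y y) (h ⁻¹' A) :=
  let ⟨φ, hfin, hJ⟩ := hA
  ⟨φ ∘ h, fun n => (hfin n).preimage h.injective.injOn,
    fun J hJ' => h.preimage_mem_omegaPt_iff.2 (hJ J hJ')⟩

theorem Homeomorph.sfin_omegaPt_groupables (h : Y ≃ₜ Z) {y : Y}
    (hs : Sfin (OmegaPt Z (h y)) (groupables (OmegaPt Z (h y)))) :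
    Sfin (OmegaPt Y y) (groupables (OmegaPt Y y)) := by
  intro A hA
  obtain ⟨F, hF, hgp⟩ := hs (fun n => h.symm ⁻¹' A n) fun n => by
    rw [h.symm.preimage_mem_omegaPt_iff, h.symm_apply_apply]
    exact hA n
  refine ⟨fun n => h ⁻¹' F n, fun n => ⟨fun x hx => by simpa using (hF n).1 hx,
    (hF n).2.preimage h.injective.injOn⟩, ?_⟩
  rw [← preimage_iUnion]
  exact ⟨h.preimage_mem_omegaPt_iff.2 hgp.1, hgp.2.preimage_homeomorph h⟩

theorem sfin_omegaPt_groupables_iff {y : Y} :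
    Sfin (OmegaPt Y y) (groupables (OmegaPt Y y)) ↔
      (∀ A ∈ OmegaPt Y y, A.Countable → Groupable (OmegaPt Y y) A) ∧
        Sfin (OmegaPt Y y) (OmegaPt Y y) := by
  refine ⟨fun hs => ⟨fun A hA hc => (hs.mem_groupables_of_countable hA hc
      fun C hC D hCD hDA => ⟨closure_mono hCD hC.1, fun hy => hA.2 (hDA hy)⟩).2,
    fun A hA => let ⟨F, hF, hgp⟩ := hs A hA; ⟨F, hF, hgp.1⟩⟩, fun ⟨hR, hs⟩ A hA => ?_⟩
  obtain ⟨F, hF, hU⟩ := hs A hA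
  exact ⟨F, hF, hU, hR _ hU (countable_iUnion fun n => (hF n).2.countable)⟩

theorem reznichenko_and_countableFanTightness_iff {y₀ : Y}
    (hhom : ∀ y, ∃ h : Y ≃ₜ Y, h y = y₀) :
    Reznichenko Y ∧ CountableFanTightness Y ↔
      Sfin (OmegaPt Y y₀) (groupables (OmegaPt Y y₀)) := by
  refine ⟨fun h => sfin_omegaPt_groupables_iff.2 ⟨h.1 y₀, h.2 y₀⟩, fun hs => ?_⟩
  have hall : ∀ y, Sfin (OmegaPt Y y) (groupables (OmegaPt Y y)) := fun y => by
    obtain ⟨h, hy⟩ := hhom y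
    exact h.sfin_omegaPt_groupables (hy ▸ hs)
  exact ⟨fun y => (sfin_omegaPt_groupables_iff.1 (hall y)).1,
    fun y => (sfin_omegaPt_groupables_iff.1 (hall y)).2⟩

theorem infinite_inter_of_mem_omegaPt [T1Space Y] {y : Y} {A U : Set Y} (hA : A ∈ OmegaPt Y y)
    (hU : U ∈ 𝓝 y) : (U ∩ A).Infinite :=
  Set.Infinite.of_accPt (x := y) <| accPt_iff_nhds.2 fun V hV => by
    obtain ⟨z, hzVU, hzA⟩ := mem_closure_iff_nhds.1 hA.1 _ (inter_mem hV hU)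
    exact ⟨z, ⟨hzVU.1, hzVU.2, hzA⟩, fun h => hA.2 (h ▸ hzA)⟩

end OmegaPt

namespace Ck

variable {X : Type u} [TopologicalSpace X]

def toContinuousMap : Ck X ≃ C(X, ℝ) where
  toFun f := ⟨f.1, f.2⟩
  invFun g := ⟨g, g.continuous⟩
  left_inv _ := rfl
  right_inv _ := rfl

theorem isInducing_toContinuousMap : IsInducing (toContinuousMap : Ck X → C(X, ℝ)) := by
  refine ⟨?_⟩
  change generateFrom _ = _
  rw [ContinuousMap.compactOpen_eq, induced_generateFrom_eq]
  congr 1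
  ext S
  constructor
  · rintro ⟨K, U, hK, hU, rfl⟩
    exact ⟨_, ⟨K, hK, U, hU, rfl⟩, rfl⟩
  · rintro ⟨_, ⟨K, hK, U, hU, rfl⟩, rfl⟩
    exact ⟨K, U, hK, hU, rfl⟩

def homeomorph : Ck X ≃ₜ C(X, ℝ) :=
  toContinuousMap.toHomeomorphOfIsInducing isInducing_toContinuousMap

theorem homeomorph_zeroCk : homeomorph (zeroCk X) = 0 := rfl

instance : T1Space (Ck X) := homeomorph.isEmbedding.t1Space

theorem exists_homeomorph_apply_eq_zeroCk (y : Ck X) : ∃ h : Ck X ≃ₜ Ck X, h y = zeroCk X :=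
  ⟨homeomorph.trans ((Homeomorph.addRight (-homeomorph y)).trans homeomorph.symm), by
    simp [← homeomorph_zeroCk]⟩

theorem hasBasis_nhds_zeroCk :
    (𝓝 (zeroCk X)).HasBasis (fun p : Set X × ℝ => IsCompact p.1 ∧ 0 < p.2)
      fun p => {f | ∀ x ∈ p.1, |f.1 x| < p.2} := by
  rw [homeomorph.nhds_eq_comap, homeomorph_zeroCk]
  convert (nhds_basis_uniformity'
    (Metric.uniformity_basis_dist.compactConvergenceUniformity (α := X))).comap homeomorph using 1
  ext p f
  simp only [mem_ofPred_eq, UniformSpace.ball, Real.dist_eq, preimage_ofPred_eq,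
    ContinuousMap.zero_apply, zero_sub, abs_neg]
  rfl

theorem zeroCk_mem_closure_iff {A : Set (Ck X)} :
    zeroCk X ∈ closure A ↔ ∀ K, IsCompact K → ∀ ε > 0, ∃ f ∈ A, ∀ x ∈ K, |f.1 x| < ε := by
  simp only [mem_closure_iff_nhds_basis hasBasis_nhds_zeroCk, Prod.forall, and_imp,
    mem_ofPred_eq]
  exact ⟨fun h K hK ε hε => h K ε hK hε, fun h K ε hK hε => h K hK ε hε⟩

end Ck

section FunctionSpace

variable {X : Type u} [TopologicalSpace X]

theorem CompletelyRegularSpace.exists_continuous_zero_one_of_isCompact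
    [CompletelyRegularSpace X] {K U : Set X} (hK : IsCompact K) (hU : IsOpen U) (hKU : K ⊆ U) :
    ∃ f : C(X, ℝ), EqOn f 0 K ∧ EqOn f 1 Uᶜ := by
  -- separate in the normal space `StoneCech X`, in which `X` sits as a subspace
  obtain ⟨V, hV, rfl⟩ := isInducing_stoneCechUnit.isOpen_iff.1 hU
  obtain ⟨g, hg0, hg1, -⟩ := exists_continuous_zero_one_of_isClosed
    (hK.image continuous_stoneCechUnit).isClosed hV.isClosed_compl
    (disjoint_compl_right_iff_subset.2 (image_subset_iff.2 hKU))
  exact ⟨g.comp ⟨stoneCechUnit, continuous_stoneCechUnit⟩,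
    fun x hx => hg0 (mem_image_of_mem _ hx), fun x hx => hg1 hx⟩

theorem KHurewicz.sfin_omegaPt_zeroCk [Nonempty X] (hX : KHurewicz X) :
    Sfin (OmegaPt (Ck X) (zeroCk X)) (groupables (OmegaPt (Ck X) (zeroCk X))) := by
  intro A hA
  obtain ⟨sq, hsq, B, hB, hdisj, hev⟩ := hX.exists_disjoint_selection (𝒜 := A)
    (O := fun n f => {x | |f.1 x| < 1 / ((n : ℝ) + 1)})
    (fun n f _ => isOpen_lt (continuous_abs.comp f.2) continuous_const)
    fun n K hK _ => (infinite_inter_of_mem_omegaPt (hA n)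
      (Ck.hasBasis_nhds_zeroCk.mem_of_mem (i := (K, 1 / ((n : ℝ) + 1)))
        ⟨hK, Nat.one_div_pos_of_nat⟩)).mono fun f hf => ⟨hf.2, hf.1⟩
  have hsmall : Tendsto (fun k => 1 / ((sq k : ℝ) + 1)) atTop (𝓝 0) :=
    tendsto_one_div_add_atTop_nhds_zero_nat.comp hsq.tendsto_atTop
  obtain ⟨x₀⟩ := ‹Nonempty X›
  refine exists_groupable_selection_of_blocks hsq.injective hB hdisj fun J hJ =>
    ⟨Ck.zeroCk_mem_closure_iff.2 fun K hK ε hε => ?_, fun h0 => ?_⟩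
  · obtain ⟨k, hkJ, ⟨f, hf, hKf⟩, hk⟩ := hJ.exists_mem_of_eventually
      ((hev _ (hK.insert x₀) (insert_nonempty _ _)).and (hsmall.eventually (gt_mem_nhds hε)))
    exact ⟨f, mem_biUnion hkJ hf, fun x hx => (hKf (mem_insert_of_mem _ hx)).trans hk⟩
  · obtain ⟨k, -, hk⟩ := mem_iUnion₂.1 h0
    exact (hA (sq k)).2 ((hB k).1 hk)

theorem mem_omegaPt_zeroCk_of_kCovers [CompletelyRegularSpace X] [Nonempty X]
    {𝒰 : ℕ → Set (Set X)} (h𝒰 : ∀ n, 𝒰 n ∈ KCovers X) (n : ℕ) :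
    {f : Ck X | ∀ r ≤ n, ∃ U ∈ 𝒰 r, {x | |f.1 x| < 1} ⊆ U} ∈ OmegaPt (Ck X) (zeroCk X) := by
  obtain ⟨x₀⟩ := ‹Nonempty X›
  refine ⟨Ck.zeroCk_mem_closure_iff.2 fun K hK ε hε => ?_, fun h0 => ?_⟩
  · choose U hU hKU using fun r => (h𝒰 r).2 _ (hK.insert x₀) (insert_nonempty _ _)
    obtain ⟨f, hf0, hf1⟩ := CompletelyRegularSpace.exists_continuous_zero_one_of_isCompact
      (hK.insert x₀) ((finite_Iic n).isOpen_biInter fun r _ => ((h𝒰 r).1.1 _ (hU r)).1)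
      (subset_iInter₂ fun r _ => hKU r)
    refine ⟨⟨f, f.continuous⟩, fun r hr => ⟨U r, hU r, fun x hx => ?_⟩, fun x hx => ?_⟩
    · by_contra hxU
      have hfx : f x = 1 := hf1 fun h => hxU (mem_iInter₂.1 h r hr)
      simp [hfx] at hx
    · simpa [hf0 (mem_insert_of_mem _ hx)] using hε
  · obtain ⟨U, hU, hsub⟩ := h0 0 (Nat.zero_le n)
    exact ((h𝒰 0).1.1 U hU).2.2 (univ_subset_iff.1 fun x _ => hsub (by simp [zeroCk]))

theorem kHurewicz_of_sfin_omegaPt_zeroCk [CompletelyRegularSpace X] [Nonempty X]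
    (hs : Sfin (OmegaPt (Ck X) (zeroCk X)) (groupables (OmegaPt (Ck X) (zeroCk X)))) :
    KHurewicz X := by
  intro 𝒰 h𝒰
  obtain ⟨G, hG, hgp⟩ := hs _ (mem_omegaPt_zeroCk_of_kCovers h𝒰)
  exact hasKSelection_of_groupable (fun n => (hG n).2) (fun n f hf => (hG n).1 hf) hgp.2
    fun K hK _ D hD => let ⟨f, hf, hfK⟩ := Ck.zeroCk_mem_closure_iff.1 hD.1 K hK 1 one_pos
      ⟨f, hf, hfK⟩

end FunctionSpace

theorem statement16_general {X : Type u} [TopologicalSpace X] [CompletelyRegularSpace X]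
    (hX : ¬ CompactSpace X) :
    List.TFAE
      [Sfin (KCovers X) (groupables (KCovers X)),
       ¬ OneWinsGfin (KCovers X) (groupables (KCovers X)),
       Reznichenko (Ck X) ∧ CountableFanTightness (Ck X),
       Sfin (OmegaPt (Ck X) (zeroCk X)) (groupables (OmegaPt (Ck X) (zeroCk X)))] := by
  have : Nonempty X := not_isEmpty_iff.1 fun _ => hX inferInstance
  tfae_have 1 → 2 := not_oneWinsGfin_of_sfin
  tfae_have 2 → 1 := sfin_of_not_oneWinsGfin
  tfae_have 1 → 4 := fun h => (kHurewicz_of_sfin h).sfin_omegaPt_zeroCk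
  tfae_have 4 → 1 := fun h => (kHurewicz_of_sfin_omegaPt_zeroCk h).sfin_kCovers
  tfae_have 3 ↔ 4 :=
    reznichenko_and_countableFanTightness_iff Ck.exists_homeomorph_apply_eq_zeroCk
  tfae_finish

theorem statement16 {X : Type u} [TopologicalSpace X] [T2Space X] [CompletelyRegularSpace X]
    (hX : ¬ CompactSpace X) :
    List.TFAE
      [Sfin (KCovers X) (groupables (KCovers X)),
       ¬ OneWinsGfin (KCovers X) (groupables (KCovers X)),
       Reznichenko (Ck X) ∧ CountableFanTightness (Ck X),
       Sfin (OmegaPt (Ck X) (zeroCk X)) (groupables (OmegaPt (Ck X) (zeroCk X)))] :=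
  statement16_general hX
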